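/- arXiv:2507.11399 — 3 statements merged into one kernel-verified Lean document; each statement's English description precedes it below -/
import Mathlib

section
/- Let a: ℝ → ℝ be strictly convex and differentiable, and suppose for each ω the solution u(t,·,ω) of uₜ + a(u)ₓ = 0 is given on [0,T] by the method of characteristics: for every (t,x) with t ≤ T there is a unique value v with u(t,x,ω) = v = u(0, x - a'(v)t, ω), and characteristics do not cross. Then for every U ∈ ℝ, the sublevel sets S(t,x,U) = {ω : u(t,x,ω) < U} satisfy S(t,x,U) = S(0, x - a'(U)t, U). -/
/-- For the scalar conservation law `uₜ + a(u)ₓ = 0` with strictly convex flux `a`, if the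
solution is given on `[0,T]` by the method of characteristics and characteristics do not
cross, then the sublevel sets satisfy `S(t,x,U) = S(0, x - a'(U)t, U)`. -/
theorem stmt3 {Ω : Type*} (T : ℝ) (hT : 0 ≤ T)
    (a : ℝ → ℝ) (ha : Differentiable ℝ a) (hconv : StrictConvexOn ℝ Set.univ a)
    (u : ℝ → ℝ → Ω → ℝ)
    -- characteristics propagate values forward: if `u(0,y,ω) = g` then
    -- `u(t, y + a'(g) t, ω) = g` for all `0 ≤ t ≤ T`
    (hfwd : ∀ ω y t, 0 ≤ t → t ≤ T →
      u t (y + deriv a (u 0 y ω) * t) ω = u 0 y ω)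
    -- each value at `(t,x)` is uniquely traced back along its characteristic
    (hback : ∀ ω t x, 0 ≤ t → t ≤ T →
      u t x ω = u 0 (x - deriv a (u t x ω) * t) ω) :
    ∀ (U : ℝ) (t x : ℝ), 0 ≤ t → t ≤ T →
      {ω : Ω | u t x ω < U} = {ω : Ω | u 0 (x - deriv a U * t) ω < U} := by
  have hmono : StrictMono (deriv a) := by
    have := hconv.strictMonoOn_deriv (fun x _ => (ha x))
    intro p q hpq
    exact this (Set.mem_univ p) (Set.mem_univ q) hpq
  -- no-crossing lemma: if `p ≤ q` and the characteristic speed at `p` exceeds that at `q`,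
  -- the characteristic from `p` stays strictly left of that from `q` up to time `t ≤ T`.
  have key : ∀ (ω : Ω) (t : ℝ), 0 ≤ t → t ≤ T → ∀ p q : ℝ, p ≤ q →
      deriv a (u 0 q ω) < deriv a (u 0 p ω) →
      p + deriv a (u 0 p ω) * t < q + deriv a (u 0 q ω) * t := by
    intro ω t ht htT p q hpq hlt
    by_contra hcon
    push_neg at hcon
    set A := deriv a (u 0 p ω) with hA
    set B := deriv a (u 0 q ω) with hB
    have hAB : 0 < A - B := by linarith
    set s := (q - p) / (A - B) with hs
    have hs0 : 0 ≤ s := div_nonneg (by linarith) (le_of_lt hAB)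
    have hst : s ≤ t := by
      rw [hs, div_le_iff₀ hAB]
      nlinarith
    have hsT : s ≤ T := hst.trans htT
    have h1 := hfwd ω p s hs0 hsT
    have h2 := hfwd ω q s hs0 hsT
    have heqpt : p + A * s = q + B * s := by
      have : (A - B) * s = q - p := by
        rw [hs]
        field_simp
      linarith
    rw [← hA] at h1
    rw [← hB] at h2
    rw [heqpt] at h1
    rw [h1] at h2
    have hfin : deriv a (u 0 q ω) < deriv a (u 0 p ω) := hlt
    rw [h2] at hfin
    exact lt_irrefl _ hfin
  intro U t x ht htT
  ext ω
  simp only [Set.mem_setOf_eq]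
  constructor
  · intro h
    by_contra hcon
    push_neg at hcon
    -- v := u t x ω < U ≤ w := u 0 (x - a'(U)t) ω
    set z := x - deriv a U * t with hz
    set v := u t x ω with hv
    have hbv : u 0 (x - deriv a v * t) ω = v := (hback ω t x ht htT).symm
    set y := x - deriv a v * t with hy
    have hvU : deriv a v < deriv a U := hmono h
    have hUw : deriv a U ≤ deriv a (u 0 z ω) := hmono.monotone hcon
    have hzy : z ≤ y := by
      rw [hz, hy]
      nlinarith
    have := key ω t ht htT z y hzy (by rw [hbv]; linarith)
    rw [hbv] at this
    have hx : y + deriv a v * t = x := by rw [hy]; ring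
    rw [hx] at this
    have : z + deriv a U * t ≤ z + deriv a (u 0 z ω) * t := by nlinarith
    rw [hz] at this
    nlinarith [key ω t ht htT z y hzy (by rw [hbv]; linarith)]
  · intro h
    by_contra hcon
    push_neg at hcon
    -- w := u 0 z ω < U ≤ v := u t x ω
    set z := x - deriv a U * t with hz
    set v := u t x ω with hv
    have hbv : u 0 (x - deriv a v * t) ω = v := (hback ω t x ht htT).symm
    set y := x - deriv a v * t with hy
    have hwU : deriv a (u 0 z ω) < deriv a U := hmono h
    have hUv : deriv a U ≤ deriv a v := hmono.monotone hcon
    have hyz : y ≤ z := by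
      rw [hz, hy]
      nlinarith
    have hkey := key ω t ht htT y z hyz (by rw [hbv]; linarith)
    rw [hbv] at hkey
    have hxx : y + deriv a v * t = x := by rw [hy]; ring
    rw [hxx] at hkey
    rw [hz] at hkey
    nlinarith
end

section
/- Under the hypotheses of the previous statement (no shocks up to time T for a scalar conservation law uₜ + a(u)ₓ = 0 with a strictly convex), the cumulative distribution function F(t,x,U) = μ{ω : u(t,x,ω) < U} satisfies F(t,x,U) = F(0, x - a'(U)t, U) for all t ∈ [0,T], x ∈ ℝ, U ∈ ℝ. -/
/-!
Along the characteristic through `y` the solution is constant, equal to `u 0 y`, and travels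
with speed `a' (u 0 y)`. Without shocks, two characteristics carrying values of different
speeds never meet before time `T`, so they keep their order. Since `a'` is strictly increasing,
the characteristic reaching `(t, x)` starts to the left of `x - a'(U) t` exactly when its value
is below `U`; hence `u t x ω < U ↔ u 0 (x - a'(U) t) ω < U` for every `ω`, and the two
sublevel sets coincide.
-/

open MeasureTheory

section Characteristics

variable {u : ℝ → ℝ → ℝ} {c : ℝ → ℝ} {T t : ℝ}

lemma speed_le_of_characteristics_cross
    (hfwd : ∀ y s, 0 ≤ s → s ≤ T → u s (y + c (u 0 y) * s) = u 0 y)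
    (htT : t ≤ T) {y₁ y₂ : ℝ} (hy : y₁ ≤ y₂)
    (hcross : y₂ + c (u 0 y₂) * t ≤ y₁ + c (u 0 y₁) * t) :
    c (u 0 y₁) ≤ c (u 0 y₂) := by
  by_contra! hfaster
  -- the two characteristics then meet at time `s ∈ [0, t]`
  have hΔ : 0 < c (u 0 y₁) - c (u 0 y₂) := sub_pos.mpr hfaster
  set s := (y₂ - y₁) / (c (u 0 y₁) - c (u 0 y₂)) with hs
  have hs0 : 0 ≤ s := div_nonneg (sub_nonneg.mpr hy) hΔ.le
  have hst : s ≤ t := by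
    rw [hs, div_le_iff₀ hΔ]
    linarith
  have hmeet : y₁ + c (u 0 y₁) * s = y₂ + c (u 0 y₂) * s := by
    have : s * (c (u 0 y₁) - c (u 0 y₂)) = y₂ - y₁ := div_mul_cancel₀ _ hΔ.ne'
    linarith
  have hsame : u 0 y₁ = u 0 y₂ := by
    rw [← hfwd y₁ s hs0 (hst.trans htT), hmeet, hfwd y₂ s hs0 (hst.trans htT)]
  exact hfaster.ne' (congrArg c hsame)

lemma lt_iff_initial_lt_of_no_shock (hc : StrictMono c)
    (hfwd : ∀ y s, 0 ≤ s → s ≤ T → u s (y + c (u 0 y) * s) = u 0 y)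
    (hback : ∀ t x, 0 ≤ t → t ≤ T → u t x = u 0 (x - c (u t x) * t))
    (ht : 0 ≤ t) (htT : t ≤ T) (x U : ℝ) :
    u t x < U ↔ u 0 (x - c U * t) < U := by
  have hfoot := (hback t x ht htT).symm
  constructor
  · intro hlt
    by_contra! hge
    have hslower : c (u t x) < c (u 0 (x - c U * t)) := hc (hlt.trans_le hge)
    have hy : x - c U * t ≤ x - c (u t x) * t := by gcongr; exact (hc hlt).le
    have hcross := speed_le_of_characteristics_cross hfwd htT hy (by
      rw [hfoot]
      nlinarith [hc.monotone hge])
    rw [hfoot] at hcross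
    exact hcross.not_gt hslower
  · intro hlt
    by_contra! hge
    have hslower : c (u 0 (x - c U * t)) < c (u t x) := hc (hlt.trans_le hge)
    have hy : x - c (u t x) * t ≤ x - c U * t := by gcongr; exact hc.monotone hge
    have hcross := speed_le_of_characteristics_cross hfwd htT hy (by
      rw [hfoot]
      nlinarith [hc hlt])
    rw [hfoot] at hcross
    exact hcross.not_gt hslower

end Characteristics

theorem stmt4_general {Ω : Type*} [MeasurableSpace Ω] (μ : Measure Ω)
    (T : ℝ)
    (a : ℝ → ℝ) (ha : Differentiable ℝ a) (hconv : StrictConvexOn ℝ Set.univ a)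
    (u : ℝ → ℝ → Ω → ℝ)
    (hfwd : ∀ ω y t, 0 ≤ t → t ≤ T →
      u t (y + deriv a (u 0 y ω) * t) ω = u 0 y ω)
    (hback : ∀ ω t x, 0 ≤ t → t ≤ T →
      u t x ω = u 0 (x - deriv a (u t x ω) * t) ω)
    (F : ℝ → ℝ → ℝ → ℝ)
    (hF : ∀ t x U, F t x U = (μ {ω : Ω | u t x ω < U}).toReal) :
    ∀ (t x U : ℝ), 0 ≤ t → t ≤ T → F t x U = F 0 (x - deriv a U * t) U := by
  intro t x U ht htT
  have hspeed : StrictMono (deriv a) :=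
    strictMonoOn_univ.mp (hconv.strictMonoOn_deriv fun x _ => ha x)
  have hsets : {ω | u t x ω < U} = {ω | u 0 (x - deriv a U * t) ω < U} := by
    ext ω
    exact lt_iff_initial_lt_of_no_shock (u := fun t x => u t x ω) hspeed
      (hfwd ω) (hback ω) ht htT x U
  rw [hF, hF, hsets]

/-- In the absence of shocks up to time `T`, the CDF of the pointwise statistics of a
scalar conservation law `uₜ + a(u)ₓ = 0` with strictly convex flux `a` satisfies
`F(t,x,U) = F(0, x - a'(U)t, U)`. -/
theorem stmt4 {Ω : Type*} [MeasurableSpace Ω] (μ : Measure Ω) [IsProbabilityMeasure μ]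
    (T : ℝ) (hT : 0 ≤ T)
    (a : ℝ → ℝ) (ha : Differentiable ℝ a) (hconv : StrictConvexOn ℝ Set.univ a)
    (u : ℝ → ℝ → Ω → ℝ)
    (hfwd : ∀ ω y t, 0 ≤ t → t ≤ T →
      u t (y + deriv a (u 0 y ω) * t) ω = u 0 y ω)
    (hback : ∀ ω t x, 0 ≤ t → t ≤ T →
      u t x ω = u 0 (x - deriv a (u t x ω) * t) ω)
    (F : ℝ → ℝ → ℝ → ℝ)
    (hF : ∀ t x U, F t x U = (μ {ω : Ω | u t x ω < U}).toReal) :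
    ∀ (t x U : ℝ), 0 ≤ t → t ≤ T → F t x U = F 0 (x - deriv a U * t) U :=
  stmt4_general μ T a ha hconv u hfwd hback F hF
end

section
/- Let Ω = {0,1} with the uniform measure μ(0) = μ(1) = 1/2. Define random fields on ℝ by traveling waves u(t,x,ω) = u₀(x-t,ω), v(t,x,ω) = v₀(x+t,ω) (solutions of uₜ + uₓ = 0 and vₜ - vₓ = 0). There exist two pairs of initial data (u₀⁽¹⁾, v₀⁽¹⁾) and (u₀⁽²⁾, v₀⁽²⁾) such that the joint pointwise statistics agree initially at every x, i.e., (u₀⁽¹⁾(x,·), v₀⁽¹⁾(x,·))_♯ μ = (u₀⁽²⁾(x,·), v₀⁽²⁾(x,·))_♯ μ for all x, but at t = 1 and x = 0 the joint pushforwards differ: (u⁽¹⁾(1,0,·), v⁽¹⁾(1,0,·))_♯ μ ≠ (u⁽²⁾(1,0,·), v⁽²⁾(1,0,·))_♯ μ. -/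
open MeasureTheory

lemma map_half_dirac (f : Bool → ℝ × ℝ) :
    Measure.map f ((2 : ENNReal)⁻¹ • (Measure.dirac false + Measure.dirac true)) =
      (2 : ENNReal)⁻¹ • (Measure.dirac (f false) + Measure.dirac (f true)) := by
  have hf : Measurable f := measurable_of_countable f
  rw [Measure.map_smul, Measure.map_add _ _ hf, Measure.map_dirac' hf, Measure.map_dirac' hf]

/-- Counterexample for systems: on `Ω = {0,1}` with the uniform measure, there are two
pairs of traveling-wave random fields (solving `uₜ + uₓ = 0`, `vₜ - vₓ = 0`) whose joint
pointwise statistics agree at `t = 0` at every `x`, but differ at `t = 1`, `x = 0`. -/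
theorem stmt6 :
    ∃ (u₀₁ v₀₁ u₀₂ v₀₂ : ℝ → Bool → ℝ),
      let μ : Measure Bool := (2 : ENNReal)⁻¹ • (Measure.dirac false + Measure.dirac true)
      -- traveling-wave solutions: u(t,x,ω) = u₀(x - t, ω), v(t,x,ω) = v₀(x + t, ω)
      let u₁ : ℝ → ℝ → Bool → ℝ := fun t x ω => u₀₁ (x - t) ω
      let v₁ : ℝ → ℝ → Bool → ℝ := fun t x ω => v₀₁ (x + t) ω
      let u₂ : ℝ → ℝ → Bool → ℝ := fun t x ω => u₀₂ (x - t) ω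
      let v₂ : ℝ → ℝ → Bool → ℝ := fun t x ω => v₀₂ (x + t) ω
      (∀ x : ℝ, Measure.map (fun ω => (u₁ 0 x ω, v₁ 0 x ω)) μ
              = Measure.map (fun ω => (u₂ 0 x ω, v₂ 0 x ω)) μ) ∧
      Measure.map (fun ω => (u₁ 1 0 ω, v₁ 1 0 ω)) μ
        ≠ Measure.map (fun ω => (u₂ 1 0 ω, v₂ 1 0 ω)) μ := by
  refine ⟨fun x ω => if x = -1 ∧ ω = false then 1 else 0,
          fun x ω => if x = 1 ∧ ω = false then 1 else 0,
          fun x ω => if x = -1 ∧ ω = false then 1 else 0,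
          fun x ω => if x = 1 ∧ ω = true then 1 else 0, ?_, ?_⟩
  · intro x
    rw [map_half_dirac, map_half_dirac]
    by_cases hx : x = -1
    · have hx1 : x - 0 ≠ 1 := by rw [hx]; norm_num
      have hx1' : x + 0 ≠ 1 := by rw [hx]; norm_num
      simp [hx, hx1, hx1']
      norm_num
    · by_cases hx2 : x = 1
      · have : x - 0 ≠ -1 := by rw [hx2]; norm_num
        have h2 : x + 0 = 1 := by rw [hx2]; norm_num
        simp only [this, h2, sub_zero, add_zero, hx2]
        norm_num
        exact add_comm _ _
      · have h1 : x - 0 ≠ -1 := by simpa using hx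
        have h2 : x + 0 ≠ 1 := by simpa using hx2
        simp [h1, h2, hx, hx2]
  · rw [map_half_dirac, map_half_dirac]
    intro h
    have hs : MeasurableSet ({((1 : ℝ), (1 : ℝ))} : Set (ℝ × ℝ)) :=
      measurableSet_singleton _
    have := congrArg (fun ν : Measure (ℝ × ℝ) => ν {((1 : ℝ), (1 : ℝ))}) h
    simp only [Measure.smul_apply, Measure.add_apply,
      Measure.dirac_apply' _ hs] at this
    norm_num [Set.indicator_apply, Prod.ext_iff] at this
end
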